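/- Let V be a module over a commutative ring with a commutative associative product ⋆ and a symmetric bilinear form g satisfying the Frobenius property g(x⋆y, z) = g(x, y⋆z). Let N, E, ω, ∘ be as in the twisted-product construction (ξ∘η = (ξ⋆η⋆ω)⋆ω^{-1} on N) and define the twisted form ᵚg(ξ,η) = g(ξ⋆ω, η⋆ω) on N. Then (N, ∘, ᵚg) again satisfies the Frobenius property: ᵚg(ξ∘η, ζ) = ᵚg(η, ξ∘ζ) for all ξ,η,ζ ∈ N. -/

import Mathlib

/-! Since `ξ ∘ η` is characterised by `(ξ ∘ η) ⋆ ω = ξ ⋆ η ⋆ ω`, both sides reduce to values of `g`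
on `V`. The Frobenius property moves every factor but the last `ω` into the first argument,
`g(a, b ⋆ c) = g(a ⋆ b, c)`, and the two resulting products `ξ ⋆ η ⋆ ω ⋆ ζ` and `η ⋆ ω ⋆ ξ ⋆ ζ`
agree by commutativity and associativity. -/

section FrobeniusTwist

variable {R V : Type*} [CommSemiring R] [AddCommMonoid V] [Module R V] (m : V →ₗ[R] V →ₗ[R] V)

theorem bilin_mul_left_comm (hcomm : ∀ x y : V, m x y = m y x)
    (hassoc : ∀ x y z : V, m (m x y) z = m x (m y z)) (x y z : V) :
    m x (m y z) = m y (m x z) := by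
  rw [← hassoc, hcomm x y, hassoc]

theorem bilin_frobenius_twist (hcomm : ∀ x y : V, m x y = m y x)
    (hassoc : ∀ x y z : V, m (m x y) z = m x (m y z))
    (g : V →ₗ[R] V →ₗ[R] R) (hfrob : ∀ x y z : V, g (m x y) z = g x (m y z))
    (x y z ω : V) :
    g (m (m x y) ω) (m z ω) = g (m y ω) (m (m x z) ω) := by
  have hprod : m (m (m x y) ω) z = m (m y ω) (m x z) := by
    rw [hassoc, hassoc, hassoc, bilin_mul_left_comm m hcomm hassoc ω,
      bilin_mul_left_comm m hcomm hassoc x]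
  rw [← hfrob, ← hfrob, hprod]

end FrobeniusTwist

theorem stmt_16_general {R V : Type*} [CommRing R] [AddCommGroup V] [Module R V]
    (m : V →ₗ[R] V →ₗ[R] V)
    (hcomm : ∀ x y : V, m x y = m y x)
    (hassoc : ∀ x y z : V, m (m x y) z = m x (m y z))
    (g : V →ₗ[R] V →ₗ[R] R)
    (hfrob : ∀ x y z : V, g (m x y) z = g x (m y z))
    (N E : Submodule R V) (ω : V)
    (e : N ≃ₗ[R] E)
    (he : ∀ ξ : N, (e ξ : V) = m ξ ω)
    (hE : ∀ ξ η : N, m (m (ξ : V) η) ω ∈ E)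
    (c : N → N → N)
    (hc : ∀ ξ η : N, c ξ η = e.symm ⟨m (m (ξ : V) η) ω, hE ξ η⟩) :
    ∀ ξ η ζ : N,
      g (m ((c ξ η : N) : V) ω) (m (ζ : V) ω) =
        g (m (η : V) ω) (m ((c ξ ζ : N) : V) ω) := by
  have hc_mul : ∀ ξ η : N, m ((c ξ η : N) : V) ω = m (m (ξ : V) η) ω := fun ξ η => by
    rw [← he, hc, e.apply_symm_apply]
  intro ξ η ζ
  rw [hc_mul, hc_mul]
  exact bilin_frobenius_twist m hcomm hassoc g hfrob ξ η ζ ω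

/-- With `⋆ = m` commutative, associative, and `g` a symmetric
Frobenius form (`g(x⋆y,z) = g(x,y⋆z)`), the twisted product
`ξ∘η = ((ξ⋆η)⋆ω)⋆ω⁻¹` on `N` together with the twisted form
`ᵚg(ξ,η) = g(ξ⋆ω, η⋆ω)` again satisfies the Frobenius property:
`ᵚg(ξ∘η, ζ) = ᵚg(η, ξ∘ζ)`. -/
theorem stmt_16 {R V : Type*} [CommRing R] [AddCommGroup V] [Module R V]
    (m : V →ₗ[R] V →ₗ[R] V)
    (hcomm : ∀ x y : V, m x y = m y x)
    (hassoc : ∀ x y z : V, m (m x y) z = m x (m y z))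
    (g : V →ₗ[R] V →ₗ[R] R)
    (hgsymm : ∀ x y : V, g x y = g y x)
    (hfrob : ∀ x y z : V, g (m x y) z = g x (m y z))
    (N E : Submodule R V) (ω : V)
    (e : N ≃ₗ[R] E)
    (he : ∀ ξ : N, (e ξ : V) = m ξ ω)
    (hE : ∀ ξ η : N, m (m (ξ : V) η) ω ∈ E)
    (c : N → N → N)
    (hc : ∀ ξ η : N, c ξ η = e.symm ⟨m (m (ξ : V) η) ω, hE ξ η⟩) :
    ∀ ξ η ζ : N,
      g (m ((c ξ η : N) : V) ω) (m (ζ : V) ω) =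
        g (m (η : V) ω) (m ((c ξ ζ : N) : V) ω) :=
  stmt_16_general m hcomm hassoc g hfrob N E ω e he hE c hc
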